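/- On a Ricci-flat 4-dimensional Lorentzian manifold, the left and right Hodge duals of the Riemann curvature tensor coincide: (1/2) ∈_{αβ}{}^{μν} R_{μνγδ} = (1/2) R_{αβμν} ∈^{μν}{}_{γδ}. -/

import Mathlib

noncomputable section
open scoped BigOperators
open MeasureTheory

/-- Points of the local coordinate chart of a `d`-dimensional manifold. -/
abbrev Pt (d : ℕ) := Fin d → ℝ

/-- Partial derivative in the `i`-th coordinate direction. -/
def pd {d : ℕ} {F : Type*} [NormedAddCommGroup F] [NormedSpace ℝ F]
    (i : Fin d) (f : Pt d → F) (x : Pt d) : F :=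
  fderiv ℝ f x (Pi.single i 1)

/-- Christoffel symbols of the second kind of the metric `g` (with inverse `ginv`). -/
def christoffel {d : ℕ} (g ginv : Pt d → Fin d → Fin d → ℝ)
    (x : Pt d) (μ α β : Fin d) : ℝ :=
  (1/2) * ∑ ν, ginv x μ ν *
    (pd α (fun y => g y ν β) x + pd β (fun y => g y ν α) x - pd ν (fun y => g y α β) x)

/-- Covariant derivative (components) of a `k`-covariant real tensor field. -/
def covD {d k : ℕ} (Γ : Pt d → Fin d → Fin d → Fin d → ℝ)
    (V : Pt d → (Fin k → Fin d) → ℝ) (x : Pt d) (β : Fin d) (a : Fin k → Fin d) : ℝ :=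
  pd β (fun y => V y a) x - ∑ j : Fin k, ∑ ρ, Γ x ρ β (a j) * V x (Function.update a j ρ)

/-- Covariant derivative (components) of a `k`-covariant complex tensor field. -/
def covDC {d k : ℕ} (Γ : Pt d → Fin d → Fin d → Fin d → ℝ)
    (V : Pt d → (Fin k → Fin d) → ℂ) (x : Pt d) (β : Fin d) (a : Fin k → Fin d) : ℂ :=
  pd β (fun y => V y a) x - ∑ j : Fin k, ∑ ρ, (Γ x ρ β (a j) : ℂ) * V x (Function.update a j ρ)

/-- Riemann curvature tensor `R^ρ_{σμν}` (first index raised). -/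
def riemannUp {d : ℕ} (g ginv : Pt d → Fin d → Fin d → ℝ)
    (x : Pt d) (ρ σ μ ν : Fin d) : ℝ :=
  pd μ (fun y => christoffel g ginv y ρ ν σ) x - pd ν (fun y => christoffel g ginv y ρ μ σ) x
    + ∑ lam, (christoffel g ginv x ρ μ lam * christoffel g ginv x lam ν σ
      - christoffel g ginv x ρ ν lam * christoffel g ginv x lam μ σ)

/-- Fully covariant Riemann curvature tensor `R_{λσμν}`. -/
def riemann {d : ℕ} (g ginv : Pt d → Fin d → Fin d → ℝ)
    (x : Pt d) (lam σ μ ν : Fin d) : ℝ :=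
  ∑ ρ, g x lam ρ * riemannUp g ginv x ρ σ μ ν

/-- Ricci curvature tensor. -/
def ricci {d : ℕ} (g ginv : Pt d → Fin d → Fin d → ℝ) (x : Pt d) (σ ν : Fin d) : ℝ :=
  ∑ ρ, riemannUp g ginv x ρ σ ρ ν

/-- Lie derivative of a `k`-covariant tensor field along the vector field `X`. -/
def lieD {d k : ℕ} (X : Pt d → Fin d → ℝ)
    (V : Pt d → (Fin k → Fin d) → ℝ) (x : Pt d) (a : Fin k → Fin d) : ℝ :=
  ∑ μ, X x μ * pd μ (fun y => V y a) x
    + ∑ j : Fin k, ∑ μ, pd (a j) (fun y => X y μ) x * V x (Function.update a j μ)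

/-- The deformation tensor `π = L_X g` of the vector field `X`. -/
def deformation {d : ℕ} (g : Pt d → Fin d → Fin d → ℝ) (X : Pt d → Fin d → ℝ)
    (x : Pt d) (α β : Fin d) : ℝ :=
  lieD X (fun y a => g y (a 0) (a 1)) x ![α, β]

/-- The Levi-Civita symbol in dimension 4. -/
def eps4 (α β γ δ : Fin 4) : ℝ :=
  ∑ σ : Equiv.Perm (Fin 4),
    if σ 0 = α ∧ σ 1 = β ∧ σ 2 = γ ∧ σ 3 = δ then ((Equiv.Perm.sign σ : ℤ) : ℝ) else 0

/-- The volume form `∈_{αβγδ}` of a metric `g` in dimension 4. -/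
def vol4 (g : Pt 4 → Fin 4 → Fin 4 → ℝ) (x : Pt 4) (α β γ δ : Fin 4) : ℝ :=
  Real.sqrt |Matrix.det (Matrix.of (g x))| * eps4 α β γ δ

/-- A symmetric bilinear form on `ℝ⁴` is Lorentzian if it has signature `(-,+,+,+)`. -/
def IsLorentzian (gm : Fin 4 → Fin 4 → ℝ) : Prop :=
  ∃ P : Matrix (Fin 4) (Fin 4) ℝ, IsUnit P.det ∧
    Matrix.of gm = P.transpose * Matrix.diagonal ![(-1 : ℝ), 1, 1, 1] * P

/-- The Hodge dual `(*F)_{αβ} = (1/2) ∈_{αβ}{}^{μν} F_{μν}` of a real 2-form. -/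
def hodge (g ginv : Pt 4 → Fin 4 → Fin 4 → ℝ) (F : Pt 4 → Fin 4 → Fin 4 → ℝ)
    (x : Pt 4) (α β : Fin 4) : ℝ :=
  (1/2) * ∑ μ, ∑ ν, ∑ ρ, ∑ σ, vol4 g x α β ρ σ * ginv x ρ μ * ginv x σ ν * F x μ ν

/-- Lowering the index of a vector field with the metric. -/
def lowerK {d : ℕ} (g : Pt d → Fin d → Fin d → ℝ) (K : Pt d → Fin d → ℝ)
    (x : Pt d) (β : Fin d) : ℝ := ∑ μ, g x β μ * K x μ

/-- The Killing 2-form `F_{αβ} = ∇_α K_β` of a Killing vector field `K`. -/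
def kF (g ginv : Pt 4 → Fin 4 → Fin 4 → ℝ) (K : Pt 4 → Fin 4 → ℝ)
    (x : Pt 4) (α β : Fin 4) : ℝ :=
  covD (christoffel g ginv) (fun y a => lowerK g K y (a 0)) x α ![β]

/-- The self-dual complexified Killing 2-form `ℱ = F + i (*F)`. -/
def calF (g ginv : Pt 4 → Fin 4 → Fin 4 → ℝ) (K : Pt 4 → Fin 4 → ℝ)
    (x : Pt 4) (α β : Fin 4) : ℂ :=
  (kF g ginv K x α β : ℂ) + Complex.I * (hodge g ginv (kF g ginv K) x α β : ℂ)

/-- The Ernst 1-form `σ_μ = 2 K^α ℱ_{αμ}`. -/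
def sigmaForm (g ginv : Pt 4 → Fin 4 → Fin 4 → ℝ) (K : Pt 4 → Fin 4 → ℝ)
    (x : Pt 4) (μ : Fin 4) : ℂ :=
  2 * ∑ α, (K x α : ℂ) * calF g ginv K x α μ

/-- The complex scalar `ℱ² = ℱ^{αβ} ℱ_{αβ}`. -/
def Fsq (g ginv : Pt 4 → Fin 4 → Fin 4 → ℝ) (K : Pt 4 → Fin 4 → ℝ) (x : Pt 4) : ℂ :=
  ∑ α, ∑ β, ∑ γ, ∑ δ, (ginv x α γ : ℂ) * (ginv x β δ : ℂ) *
    calF g ginv K x α β * calF g ginv K x γ δ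

/-- The squared length `g(K,K)` of a vector field `K`. -/
def gKK {d : ℕ} (g : Pt d → Fin d → Fin d → ℝ) (K : Pt d → Fin d → ℝ) (x : Pt d) : ℝ :=
  ∑ α, ∑ β, g x α β * K x α * K x β


def epsZ (a b c d : Fin 4) : ℤ :=
  Int.sign ((b:ℤ)-a) * Int.sign ((c:ℤ)-a) * Int.sign ((d:ℤ)-a) *
  Int.sign ((c:ℤ)-b) * Int.sign ((d:ℤ)-b) * Int.sign ((d:ℤ)-c)
def dZ (i j : Fin 4) : ℤ := if i = j then 1 else 0
def ER (a b c d : Fin 4) : ℝ := (epsZ a b c d : ℝ)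
def dR (i j : Fin 4) : ℝ := if i = j then 1 else 0

lemma D1Z : ∀ e c d a r s : Fin 4, (∑ b, epsZ e b c d * epsZ a b r s) =
    dZ e a * (dZ c r * dZ d s - dZ c s * dZ d r)
    - dZ c a * (dZ e r * dZ d s - dZ e s * dZ d r)
    + dZ d a * (dZ e r * dZ c s - dZ e s * dZ c r) := by decide

lemma D2Z : ∀ b c d b' c' d' : Fin 4, (∑ e, epsZ e b c d * epsZ e b' c' d') =
    dZ b b' * (dZ c c' * dZ d d' - dZ c d' * dZ d c')
    - dZ b c' * (dZ c b' * dZ d d' - dZ c d' * dZ d b')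
    + dZ b d' * (dZ c b' * dZ d c' - dZ c c' * dZ d b') := by decide

lemma epsZ_swap12 : ∀ a b c d : Fin 4, epsZ b a c d = - epsZ a b c d := by decide
lemma epsZ_pair : ∀ a b c d : Fin 4, epsZ a b c d = epsZ c d a b := by decide
lemma epsZ_cyc : ∀ e b c d : Fin 4, epsZ e d b c = epsZ e b c d := by decide

lemma D1R (e c d a r s : Fin 4) : (∑ b, ER e b c d * ER a b r s) =
    dR e a * (dR c r * dR d s - dR c s * dR d r)
    - dR c a * (dR e r * dR d s - dR e s * dR d r)
    + dR d a * (dR e r * dR c s - dR e s * dR c r) := by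
  have h1 := D1Z e c d a r s
  have h2 : ((∑ b, epsZ e b c d * epsZ a b r s : ℤ) : ℝ)
      = ∑ b, ER e b c d * ER a b r s := by push_cast [ER]; rfl
  rw [← h2, h1]; simp [dZ, dR]

lemma D2R (b c d b' c' d' : Fin 4) : (∑ e, ER e b c d * ER e b' c' d') =
    dR b b' * (dR c c' * dR d d' - dR c d' * dR d c')
    - dR b c' * (dR c b' * dR d d' - dR c d' * dR d b')
    + dR b d' * (dR c b' * dR d c' - dR c c' * dR d b') := by
  have h1 := D2Z b c d b' c' d'
  have h2 : ((∑ e, epsZ e b c d * epsZ e b' c' d' : ℤ) : ℝ)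
      = ∑ e, ER e b c d * ER e b' c' d' := by push_cast [ER]; rfl
  rw [← h2, h1]; simp [dZ, dR]

lemma ER_swap12 (a b c d : Fin 4) : ER b a c d = - ER a b c d := by
  simp [ER, epsZ_swap12 a b c d]
lemma ER_pair (a b c d : Fin 4) : ER a b c d = ER c d a b := by
  rw [ER, ER, epsZ_pair a b c d]
lemma ER_cyc (e b c d : Fin 4) : ER e d b c = ER e b c d := by
  rw [ER, ER, epsZ_cyc e b c d]
lemma ER_cyc2 (e b c d : Fin 4) : ER e c d b = ER e b c d := by
  rw [← ER_cyc e b c d, ← ER_cyc e d b c]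

-- sum reorder helpers
variable {M : Type*} [AddCommMonoid M]

lemma s12 (f : Fin 4 → Fin 4 → M) : ∑ a, ∑ b, f a b = ∑ b, ∑ a, f a b :=
  Finset.sum_comm
lemma s23 (f : Fin 4 → Fin 4 → Fin 4 → M) :
    ∑ a, ∑ b, ∑ c, f a b c = ∑ a, ∑ c, ∑ b, f a b c :=
  Finset.sum_congr rfl fun _ _ => Finset.sum_comm
lemma s34 (f : Fin 4 → Fin 4 → Fin 4 → Fin 4 → M) :
    ∑ a, ∑ b, ∑ c, ∑ d, f a b c d = ∑ a, ∑ b, ∑ d, ∑ c, f a b c d :=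
  Finset.sum_congr rfl fun _ _ => s23 _
lemma s45 (f : Fin 4 → Fin 4 → Fin 4 → Fin 4 → Fin 4 → M) :
    ∑ a, ∑ b, ∑ c, ∑ d, ∑ e, f a b c d e = ∑ a, ∑ b, ∑ c, ∑ e, ∑ d, f a b c d e :=
  Finset.sum_congr rfl fun _ _ => s34 _

lemma rot3 (f : Fin 4 → Fin 4 → Fin 4 → M) :
    ∑ a, ∑ b, ∑ c, f a b c = ∑ a, ∑ b, ∑ c, f c a b :=
  (s12 _).trans (Finset.sum_congr rfl fun _ _ => Finset.sum_comm)
lemma rot3' (f : Fin 4 → Fin 4 → Fin 4 → M) :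
    ∑ a, ∑ b, ∑ c, f a b c = ∑ a, ∑ b, ∑ c, f b c a :=
  (rot3 f).trans (rot3 _)

lemma sum2_congr {f g : Fin 4 → Fin 4 → M} (h : ∀ a b, f a b = g a b) :
    ∑ a, ∑ b, f a b = ∑ a, ∑ b, g a b :=
  Finset.sum_congr rfl fun a _ => Finset.sum_congr rfl fun b _ => h a b
lemma sum3_congr {f g : Fin 4 → Fin 4 → Fin 4 → M} (h : ∀ a b c, f a b c = g a b c) :
    ∑ a, ∑ b, ∑ c, f a b c = ∑ a, ∑ b, ∑ c, g a b c :=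
  Finset.sum_congr rfl fun a _ => sum2_congr (h a)
lemma sum4_congr {f g : Fin 4 → Fin 4 → Fin 4 → Fin 4 → M}
    (h : ∀ a b c d, f a b c d = g a b c d) :
    ∑ a, ∑ b, ∑ c, ∑ d, f a b c d = ∑ a, ∑ b, ∑ c, ∑ d, g a b c d :=
  Finset.sum_congr rfl fun a _ => sum3_congr (h a)

section Alg

variable (H : Fin 4 → Fin 4 → ℝ) (T : Fin 4 → Fin 4 → Fin 4 → Fin 4 → ℝ)

/-- raised tensor -/
def Wt (r s c d : Fin 4) : ℝ := ∑ m, ∑ n, H r m * H s n * T m n c d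

/-- left dual (without the 1/2 factor) -/
def St (a b c d : Fin 4) : ℝ := ∑ r, ∑ s, ER a b r s * Wt H T r s c d

variable {H} {T}
variable (hH : ∀ a b, H a b = H b a)
variable (hA1 : ∀ a b c d, T b a c d = - T a b c d)
variable (hA2 : ∀ a b c d, T a b d c = - T a b c d)
variable (hP : ∀ a b c d, T a b c d = T c d a b)
variable (hTr : ∀ b d, ∑ a, ∑ c, H a c * T a b c d = 0)

section
include hH hTr

/-- trace on slots 1,3 with summation order (c,m) -/
lemma h13 : ∀ n s : Fin 4, (∑ c, ∑ m, H c m * T m n c s) = 0 := by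
  intro n s
  rw [s12]
  rw [← hTr n s]
  exact sum2_congr fun m c => by rw [hH]
end

section
include hH hTr

lemma trTA : (∑ c, ∑ d, Wt H T c d c d) = 0 := by
  simp only [Wt]
  calc ∑ c, ∑ d, ∑ m, ∑ n, H c m * H d n * T m n c d
      = ∑ d, ∑ n, ∑ c, ∑ m, H c m * H d n * T m n c d := by
        rw [s12]
        refine Finset.sum_congr rfl fun d _ => ?_
        rw [s23 fun c m n => H c m * H d n * T m n c d,
            s12 fun c n => ∑ m, H c m * H d n * T m n c d]
    _ = ∑ d, ∑ n, H d n * ∑ c, ∑ m, H c m * T m n c d := by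
        refine sum2_congr fun d n => ?_
        rw [Finset.mul_sum]
        refine Finset.sum_congr rfl fun c _ => ?_
        rw [Finset.mul_sum]
        exact Finset.sum_congr rfl fun m _ => by ring
    _ = 0 := by
        simp [h13 hH hTr]
end

end Alg

section Alg2
variable {H : Fin 4 → Fin 4 → ℝ} {T : Fin 4 → Fin 4 → Fin 4 → Fin 4 → ℝ}
variable (hH : ∀ a b, H a b = H b a)
variable (hA1 : ∀ a b c d, T b a c d = - T a b c d)
variable (hA2 : ∀ a b c d, T a b d c = - T a b c d)
variable (hP : ∀ a b c d, T a b c d = T c d a b)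
variable (hTr : ∀ b d, ∑ a, ∑ c, H a c * T a b c d = 0)

include hH hA1 hTr in
lemma trTB : (∑ c, ∑ d, Wt H T d c c d) = 0 := by
  simp only [Wt]
  calc ∑ c, ∑ d, ∑ m, ∑ n, H d m * H c n * T m n c d
      = ∑ d, ∑ m, ∑ c, ∑ n, H d m * H c n * T m n c d := by
        rw [s12]
        refine Finset.sum_congr rfl fun d _ => ?_
        rw [s12 fun c m => ∑ n, H d m * H c n * T m n c d]
    _ = ∑ d, ∑ m, H d m * ∑ c, ∑ n, (- (H c n * T n m c d)) := by
        refine sum2_congr fun d m => ?_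
        rw [Finset.mul_sum]
        refine Finset.sum_congr rfl fun c _ => ?_
        rw [Finset.mul_sum]
        refine Finset.sum_congr rfl fun n _ => ?_
        rw [hA1 n m c d]; ring
    _ = 0 := by
        refine Finset.sum_eq_zero fun d _ => Finset.sum_eq_zero fun m _ => ?_
        have h0 : (∑ c, ∑ n, -(H c n * T n m c d)) = 0 := by
          simp only [Finset.sum_neg_distrib, h13 hH hTr m d, neg_zero]
        rw [h0, mul_zero]

include hH hA1 hA2 hP hTr in
lemma trTC (u v : Fin 4) : (∑ d, Wt H T u d v d) = 0 := by
  simp only [Wt]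
  calc ∑ d, ∑ m, ∑ n, H u m * H d n * T m n v d
      = ∑ m, ∑ d, ∑ n, H u m * H d n * T m n v d := by rw [s12]
    _ = ∑ m, H u m * ∑ n, ∑ d, H n d * T d v n m := by
        refine Finset.sum_congr rfl fun m _ => ?_
        rw [s12 fun n d => H n d * T d v n m, Finset.mul_sum]
        refine Finset.sum_congr rfl fun d _ => ?_
        rw [Finset.mul_sum]
        refine Finset.sum_congr rfl fun n _ => ?_
        have h1 : T m n v d = T d v n m := by
          rw [hP m n v d, hA1 d v m n, hA2 d v n m]; ring
        rw [h1, hH d n]; ring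
    _ = 0 := by simp [h13 hH hTr]

include hH hA2 hTr in
lemma trTD (u v : Fin 4) : (∑ d, Wt H T d u v d) = 0 := by
  simp only [Wt]
  calc ∑ d, ∑ m, ∑ n, H d m * H u n * T m n v d
      = ∑ n, ∑ d, ∑ m, H d m * H u n * T m n v d := by
        rw [s23 fun d m n => H d m * H u n * T m n v d, s12]
    _ = ∑ n, H u n * ∑ d, ∑ m, (- (H d m * T m n d v)) := by
        refine Finset.sum_congr rfl fun n _ => ?_
        rw [Finset.mul_sum]
        refine Finset.sum_congr rfl fun d _ => ?_
        rw [Finset.mul_sum]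
        refine Finset.sum_congr rfl fun m _ => ?_
        rw [hA2 m n d v]; ring
    _ = 0 := by
        refine Finset.sum_eq_zero fun n _ => ?_
        have h0 : (∑ d, ∑ m, -(H d m * T m n d v)) = 0 := by
          simp only [Finset.sum_neg_distrib, h13 hH hTr n v, neg_zero]
        rw [h0, mul_zero]

include hH hA1 hTr in
lemma trTE (u v : Fin 4) : (∑ c, Wt H T u c c v) = 0 := by
  simp only [Wt]
  calc ∑ c, ∑ m, ∑ n, H u m * H c n * T m n c v
      = ∑ m, ∑ c, ∑ n, H u m * H c n * T m n c v := by rw [s12]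
    _ = ∑ m, H u m * ∑ c, ∑ n, (- (H c n * T n m c v)) := by
        refine Finset.sum_congr rfl fun m _ => ?_
        rw [Finset.mul_sum]
        refine Finset.sum_congr rfl fun c _ => ?_
        rw [Finset.mul_sum]
        refine Finset.sum_congr rfl fun n _ => ?_
        rw [hA1 n m c v]; ring
    _ = 0 := by
        refine Finset.sum_eq_zero fun m _ => ?_
        have h0 : (∑ c, ∑ n, -(H c n * T n m c v)) = 0 := by
          simp only [Finset.sum_neg_distrib, h13 hH hTr m v, neg_zero]
        rw [h0, mul_zero]

include hH hTr in
lemma trTF (u v : Fin 4) : (∑ c, Wt H T c u c v) = 0 := by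
  simp only [Wt]
  calc ∑ c, ∑ m, ∑ n, H c m * H u n * T m n c v
      = ∑ n, ∑ c, ∑ m, H c m * H u n * T m n c v := by
        rw [s23 fun c m n => H c m * H u n * T m n c v, s12]
    _ = ∑ n, H u n * ∑ c, ∑ m, H c m * T m n c v := by
        refine Finset.sum_congr rfl fun n _ => ?_
        rw [Finset.mul_sum]
        refine Finset.sum_congr rfl fun c _ => ?_
        rw [Finset.mul_sum]
        refine Finset.sum_congr rfl fun m _ => ?_
        ring
    _ = 0 := by simp [h13 hH hTr]

end Alg2

section Alg3
variable {H : Fin 4 → Fin 4 → ℝ} {T : Fin 4 → Fin 4 → Fin 4 → Fin 4 → ℝ}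
variable (hH : ∀ a b, H a b = H b a)
variable (hA1 : ∀ a b c d, T b a c d = - T a b c d)
variable (hA2 : ∀ a b c d, T a b d c = - T a b c d)
variable (hP : ∀ a b c d, T a b c d = T c d a b)
variable (hTr : ∀ b d, ∑ a, ∑ c, H a c * T a b c d = 0)

include hH hA1 hA2 hP hTr in
lemma stepA (a e : Fin 4) :
    (∑ b, ∑ c, ∑ d, ER e b c d * St H T a b c d) = 0 := by
  simp only [St, Finset.mul_sum]
  calc ∑ b, ∑ c, ∑ d, ∑ r, ∑ s, ER e b c d * (ER a b r s * Wt H T r s c d)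
      = ∑ c, ∑ d, ∑ r, ∑ s, ∑ b, ER e b c d * (ER a b r s * Wt H T r s c d) := by
        rw [s12]
        refine Finset.sum_congr rfl fun c _ => ?_
        rw [s12 fun b d => ∑ r, ∑ s, ER e b c d * (ER a b r s * Wt H T r s c d)]
        refine Finset.sum_congr rfl fun d _ => ?_
        rw [s12 fun b r => ∑ s, ER e b c d * (ER a b r s * Wt H T r s c d)]
        refine Finset.sum_congr rfl fun r _ => ?_
        rw [s12 fun b s => ER e b c d * (ER a b r s * Wt H T r s c d)]
    _ = ∑ c, ∑ d, ∑ r, ∑ s,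
          (dR e a * (dR c r * dR d s - dR c s * dR d r)
           - dR c a * (dR e r * dR d s - dR e s * dR d r)
           + dR d a * (dR e r * dR c s - dR e s * dR c r)) * Wt H T r s c d := by
        refine sum4_congr fun c d r s => ?_
        rw [← D1R e c d a r s, Finset.sum_mul]
        exact Finset.sum_congr rfl fun b _ => by ring
    _ = 0 := by
        simp only [dR, ite_mul, mul_ite, one_mul, zero_mul, mul_one, mul_zero,
          sub_mul, add_mul, Finset.sum_sub_distrib, Finset.sum_add_distrib,
          Finset.sum_ite_eq, Finset.sum_ite_eq', Finset.mem_univ, if_true,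
          Finset.sum_ite_irrel, Finset.sum_const_zero]
        rw [trTA hH hTr, trTB hH hA1 hTr, trTC hH hA1 hA2 hP hTr e a,
          trTD hH hA2 hTr e a, trTE hH hA1 hTr e a, trTF hH hTr e a]
        simp
end Alg3

section Alg4
variable {H : Fin 4 → Fin 4 → ℝ} {T : Fin 4 → Fin 4 → Fin 4 → Fin 4 → ℝ}
variable (hH : ∀ a b, H a b = H b a)
variable (hA1 : ∀ a b c d, T b a c d = - T a b c d)
variable (hA2 : ∀ a b c d, T a b d c = - T a b c d)
variable (hP : ∀ a b c d, T a b c d = T c d a b)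
variable (hTr : ∀ b d, ∑ a, ∑ c, H a c * T a b c d = 0)

include hA2 in
lemma Wcd (r s c d : Fin 4) : Wt H T r s d c = - Wt H T r s c d := by
  simp only [Wt]
  rw [← Finset.sum_neg_distrib]
  refine Finset.sum_congr rfl fun m _ => ?_
  rw [← Finset.sum_neg_distrib]
  refine Finset.sum_congr rfl fun n _ => ?_
  rw [hA2 m n c d]; ring

include hA2 in
lemma Scd (a b c d : Fin 4) : St H T a b d c = - St H T a b c d := by
  simp only [St]
  rw [← Finset.sum_neg_distrib]
  refine Finset.sum_congr rfl fun r _ => ?_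
  rw [← Finset.sum_neg_distrib]
  refine Finset.sum_congr rfl fun s _ => ?_
  rw [Wcd hA2 r s c d]; ring

lemma Sab (a b c d : Fin 4) : St H T b a c d = - St H T a b c d := by
  simp only [St]
  rw [← Finset.sum_neg_distrib]
  refine Finset.sum_congr rfl fun r _ => ?_
  rw [← Finset.sum_neg_distrib]
  refine Finset.sum_congr rfl fun s _ => ?_
  rw [ER_swap12 a b r s]; ring

include hH hA1 hA2 hP hTr in
lemma stepB (a b c d : Fin 4) :
    St H T a b c d + St H T a c d b + St H T a d b c = 0 := by
  set F : Fin 4 → Fin 4 → Fin 4 → ℝ :=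
    fun x y z => St H T a x y z + St H T a y z x + St H T a z x y with hF
  have hFanti1 : ∀ x y z, F y x z = - F x y z := by
    intro x y z
    simp only [hF]
    rw [Scd hA2 a y x z, Scd hA2 a x z y, Scd hA2 a z y x]; ring
  have hFanti2 : ∀ x y z, F x z y = - F x y z := by
    intro x y z
    simp only [hF]
    rw [Scd hA2 a x z y, Scd hA2 a z y x, Scd hA2 a y x z]; ring
  have hN : ∀ e, (∑ b', ∑ c', ∑ d', ER e b' c' d' * F b' c' d') = 0 := by
    intro e
    have e1 : (∑ b', ∑ c', ∑ d', ER e b' c' d' * St H T a c' d' b')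
        = ∑ b', ∑ c', ∑ d', ER e b' c' d' * St H T a b' c' d' := by
      rw [rot3 fun x y z => ER e x y z * St H T a y z x]
      exact sum3_congr fun x y z => by rw [ER_cyc]
    have e2 : (∑ b', ∑ c', ∑ d', ER e b' c' d' * St H T a d' b' c')
        = ∑ b', ∑ c', ∑ d', ER e b' c' d' * St H T a b' c' d' := by
      rw [rot3' fun x y z => ER e x y z * St H T a z x y]
      exact sum3_congr fun x y z => by rw [ER_cyc2]
    have expand : (∑ b', ∑ c', ∑ d', ER e b' c' d' * F b' c' d')
        = (∑ b', ∑ c', ∑ d', ER e b' c' d' * St H T a b' c' d')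
          + (∑ b', ∑ c', ∑ d', ER e b' c' d' * St H T a c' d' b')
          + (∑ b', ∑ c', ∑ d', ER e b' c' d' * St H T a d' b' c') := by
      simp only [hF, mul_add, Finset.sum_add_distrib]
    rw [expand, e1, e2, stepA hH hA1 hA2 hP hTr a e]
    ring
  have key : (∑ e, ER e b c d * (∑ b', ∑ c', ∑ d', ER e b' c' d' * F b' c' d')) = 0 := by
    simp [hN]
  have key2 : (∑ e, ER e b c d * (∑ b', ∑ c', ∑ d', ER e b' c' d' * F b' c' d'))
      = 6 * F b c d := by
    calc (∑ e, ER e b c d * (∑ b', ∑ c', ∑ d', ER e b' c' d' * F b' c' d'))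
        = ∑ e, ∑ b', ∑ c', ∑ d', ER e b c d * (ER e b' c' d' * F b' c' d') := by
          simp only [Finset.mul_sum]
      _ = ∑ b', ∑ c', ∑ d', ∑ e, ER e b c d * (ER e b' c' d' * F b' c' d') := by
          rw [s12]
          refine Finset.sum_congr rfl fun b' _ => ?_
          rw [s12 fun e c' => ∑ d', ER e b c d * (ER e b' c' d' * F b' c' d')]
          refine Finset.sum_congr rfl fun c' _ => ?_
          rw [s12 fun e d' => ER e b c d * (ER e b' c' d' * F b' c' d')]
      _ = ∑ b', ∑ c', ∑ d',
            (dR b b' * (dR c c' * dR d d' - dR c d' * dR d c')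
             - dR b c' * (dR c b' * dR d d' - dR c d' * dR d b')
             + dR b d' * (dR c b' * dR d c' - dR c c' * dR d b')) * F b' c' d' := by
          refine sum3_congr fun b' c' d' => ?_
          rw [← D2R b c d b' c' d', Finset.sum_mul]
          exact Finset.sum_congr rfl fun e _ => by ring
      _ = 6 * F b c d := by
          simp only [dR, ite_mul, mul_ite, one_mul, zero_mul, mul_one, mul_zero,
            sub_mul, add_mul, Finset.sum_sub_distrib, Finset.sum_add_distrib,
            Finset.sum_ite_eq, Finset.sum_ite_eq', Finset.mem_univ, if_true,
            Finset.sum_ite_irrel, Finset.sum_const_zero]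
          have k1 : F b d c = -F b c d := hFanti2 b c d
          have k2 : F c b d = -F b c d := hFanti1 b c d
          have k3 : F d b c = -F b d c := hFanti1 b d c
          have k4 : F c d b = -F c b d := hFanti2 c b d
          have k5 : F d c b = -F c d b := hFanti1 c d b
          linarith
  have h6 : (6:ℝ) * F b c d = 0 := by rw [← key2, key]
  have : F b c d = 0 := by linarith
  simpa [hF] using this
end Alg4

section Alg5
variable {H : Fin 4 → Fin 4 → ℝ} {T : Fin 4 → Fin 4 → Fin 4 → Fin 4 → ℝ}
variable (hH : ∀ a b, H a b = H b a)
variable (hA1 : ∀ a b c d, T b a c d = - T a b c d)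
variable (hA2 : ∀ a b c d, T a b d c = - T a b c d)
variable (hP : ∀ a b c d, T a b c d = T c d a b)
variable (hTr : ∀ b d, ∑ a, ∑ c, H a c * T a b c d = 0)

include hH hA1 hA2 hP hTr in
lemma Spair (a b c d : Fin 4) : St H T a b c d = St H T c d a b := by
  have B1 := stepB hH hA1 hA2 hP hTr a b c d
  have B2 := stepB hH hA1 hA2 hP hTr b c d a
  have B3 := stepB hH hA1 hA2 hP hTr c a b d
  have B4 := stepB hH hA1 hA2 hP hTr d a b c
  -- antisym relations
  have e1 : St H T b c d a = - St H T c b d a := Sab c b d a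
  have e2 : St H T c b d a = - St H T c b a d := by rw [Scd hA2 c b a d]
  have e3 : St H T b d a c = - St H T d b a c := Sab d b a c
  have e4 : St H T d b a c = - St H T d b c a := by rw [Scd hA2 d b c a]
  have e5 : St H T b a c d = - St H T a b c d := Sab a b c d
  have e6 : St H T c a b d = - St H T a c b d := Sab a c b d
  have e7 : St H T a c b d = - St H T a c d b := by rw [Scd hA2 a c d b]
  have e8 : St H T c b d a = - St H T b c d a := Sab b c d a
  have e9 : St H T c d a b = St H T c d a b := rfl
  have e10 : St H T d a b c = - St H T a d b c := Sab a d b c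
  have e11 : St H T d b c a = - St H T b d c a := Sab b d c a
  have e12 : St H T b d c a = - St H T b d a c := by rw [Scd hA2 b d a c]
  have e13 : St H T d c a b = - St H T c d a b := Sab c d a b
  linarith
end Alg5

section Alg6
variable {H : Fin 4 → Fin 4 → ℝ} {T : Fin 4 → Fin 4 → Fin 4 → Fin 4 → ℝ}
variable (hH : ∀ a b, H a b = H b a)
variable (hA1 : ∀ a b c d, T b a c d = - T a b c d)
variable (hA2 : ∀ a b c d, T a b d c = - T a b c d)
variable (hP : ∀ a b c d, T a b c d = T c d a b)
variable (hTr : ∀ b d, ∑ a, ∑ c, H a c * T a b c d = 0)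

include hH hA1 hA2 hP hTr in
theorem dualAlg (a b c d : Fin 4) :
    (∑ μ, ∑ ν, ∑ ρ, ∑ σ, ER a b ρ σ * H ρ μ * H σ ν * T μ ν c d)
    = ∑ μ, ∑ ν, ∑ ρ, ∑ σ, T a b μ ν * H μ ρ * H ν σ * ER ρ σ c d := by
  have L : (∑ μ, ∑ ν, ∑ ρ, ∑ σ, ER a b ρ σ * H ρ μ * H σ ν * T μ ν c d)
      = St H T a b c d := by
    calc (∑ μ, ∑ ν, ∑ ρ, ∑ σ, ER a b ρ σ * H ρ μ * H σ ν * T μ ν c d)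
        = ∑ ρ, ∑ σ, ∑ μ, ∑ ν, ER a b ρ σ * H ρ μ * H σ ν * T μ ν c d := by
          rw [s23 fun μ ν ρ => ∑ σ, ER a b ρ σ * H ρ μ * H σ ν * T μ ν c d,
              s12 fun μ ρ => ∑ ν, ∑ σ, ER a b ρ σ * H ρ μ * H σ ν * T μ ν c d]
          refine Finset.sum_congr rfl fun ρ _ => ?_
          exact rot3' fun μ ν σ => ER a b ρ σ * H ρ μ * H σ ν * T μ ν c d
      _ = St H T a b c d := by
          simp only [St, Wt, Finset.mul_sum]
          refine sum2_congr fun ρ σ => sum2_congr fun μ ν => by ring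
  have R : (∑ μ, ∑ ν, ∑ ρ, ∑ σ, T a b μ ν * H μ ρ * H ν σ * ER ρ σ c d)
      = St H T c d a b := by
    calc (∑ μ, ∑ ν, ∑ ρ, ∑ σ, T a b μ ν * H μ ρ * H ν σ * ER ρ σ c d)
        = ∑ ρ, ∑ σ, ∑ μ, ∑ ν, T a b μ ν * H μ ρ * H ν σ * ER ρ σ c d := by
          rw [s23 fun μ ν ρ => ∑ σ, T a b μ ν * H μ ρ * H ν σ * ER ρ σ c d,
              s12 fun μ ρ => ∑ ν, ∑ σ, T a b μ ν * H μ ρ * H ν σ * ER ρ σ c d]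
          refine Finset.sum_congr rfl fun ρ _ => ?_
          exact rot3' fun μ ν σ => T a b μ ν * H μ ρ * H ν σ * ER ρ σ c d
      _ = St H T c d a b := by
          simp only [St, Wt, Finset.mul_sum]
          refine sum2_congr fun ρ σ => sum2_congr fun μ ν => ?_
          rw [hP μ ν a b, ← ER_pair ρ σ c d, hH ρ μ, hH σ ν]
          ring
  rw [L, R]
  exact Spair hH hA1 hA2 hP hTr a b c d
end Alg6

lemma contDiff_det4 (M : Pt 4 → Fin 4 → Fin 4 → ℝ)
    (h : ∀ i j, ContDiff ℝ (⊤ : ℕ∞) fun x => M x i j) :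
    ContDiff ℝ (⊤ : ℕ∞) fun x => (Matrix.of (M x)).det := by
  have e : (fun x => (Matrix.of (M x)).det)
      = fun x => ∑ σ : Equiv.Perm (Fin 4),
          ((Equiv.Perm.sign σ : ℤ) : ℝ) * (M x (σ 0) 0 * M x (σ 1) 1 * M x (σ 2) 2 * M x (σ 3) 3) := by
    funext x
    rw [Matrix.det_apply]
    refine Finset.sum_congr rfl fun σ _ => ?_
    rw [Fin.prod_univ_four]
    simp only [Matrix.of_apply, Units.smul_def, zsmul_eq_mul]
  rw [e]
  refine ContDiff.sum fun σ _ => contDiff_const.mul ?_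
  exact (((h _ 0).mul (h _ 1)).mul (h _ 2)).mul (h _ 3)

section G
variable {g ginv : Pt 4 → Fin 4 → Fin 4 → ℝ}
variable (hg : ∀ α β, ContDiff ℝ (⊤ : ℕ∞) fun x => g x α β)
variable (hsymm : ∀ x α β, g x α β = g x β α)
variable (hinv : ∀ x α β, ∑ μ, g x α μ * ginv x μ β = if α = β then (1:ℝ) else 0)
variable (hLor : ∀ x, IsLorentzian (g x))

include hinv in
lemma gmul_eq_one : ∀ x, Matrix.of (g x) * Matrix.of (ginv x) = 1 := by
  intro x
  ext i j
  rw [Matrix.mul_apply, Matrix.one_apply]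
  exact hinv x i j

include hinv in
lemma ginv_eq_inv : ∀ x, Matrix.of (ginv x) = (Matrix.of (g x))⁻¹ :=
  fun x => (Matrix.inv_eq_right_inv (gmul_eq_one hinv x)).symm

include hinv in
lemma hinv' : ∀ x α β, ∑ μ, ginv x α μ * g x μ β = if α = β then (1:ℝ) else 0 := by
  intro x α β
  have h := mul_eq_one_comm.mp (gmul_eq_one hinv x)
  have := congrFun (congrFun h α) β
  rw [Matrix.mul_apply, Matrix.one_apply] at this
  exact this

include hLor in
lemma det_ne : ∀ x, (Matrix.of (g x)).det ≠ 0 := by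
  intro x
  obtain ⟨P, hP, heq⟩ := hLor x
  rw [heq]
  have hd : (Matrix.diagonal ![(-1 : ℝ), 1, 1, 1]).det = -1 := by
    rw [Matrix.det_diagonal, Fin.prod_univ_four]
    norm_num [Matrix.cons_val_two, Matrix.cons_val_three]
  rw [Matrix.det_mul, Matrix.det_mul, Matrix.det_transpose, hd]
  have := hP.ne_zero
  intro hc
  apply this
  nlinarith [sq_nonneg P.det]

include hsymm hinv in
lemma ginv_symm : ∀ x α β, ginv x α β = ginv x β α := by
  intro x α β
  have hgs : (Matrix.of (g x)).transpose = Matrix.of (g x) := by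
    ext i j; exact hsymm x j i
  have h1 : (Matrix.of (ginv x)).transpose = Matrix.of (ginv x) := by
    rw [ginv_eq_inv hinv x, Matrix.transpose_nonsing_inv, hgs]
  have := congrFun (congrFun h1 β) α
  simpa [Matrix.transpose_apply] using this

include hg hinv hLor in
lemma ginv_smooth : ∀ α β, ContDiff ℝ (⊤ : ℕ∞) fun x => ginv x α β := by
  intro i j
  have e : (fun x => ginv x i j)
      = fun x => ((Matrix.of (g x)).det)⁻¹ * (Matrix.of (g x)).adjugate i j := by
    funext x
    have h1 : ginv x i j = (Matrix.of (g x))⁻¹ i j := by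
      rw [← ginv_eq_inv hinv x]; rfl
    rw [h1, Matrix.inv_def, Matrix.smul_apply, smul_eq_mul, Ring.inverse_eq_inv']
  rw [e]
  refine ContDiff.mul (ContDiff.inv (contDiff_det4 g hg) (det_ne hLor)) ?_
  have e2 : (fun x => (Matrix.of (g x)).adjugate i j)
      = fun x => (Matrix.of (fun k l => if k = j then (Pi.single i 1 : Fin 4 → ℝ) l else g x k l)).det := by
    funext x
    rw [Matrix.adjugate_apply]
    congr 1
    ext k l
    rw [Matrix.updateRow_apply]
    simp [Matrix.of_apply]
  rw [e2]
  refine contDiff_det4 _ fun k l => ?_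
  by_cases hk : k = j <;> simp [hk] <;> [exact contDiff_const; exact hg k l]
end G

section PD
lemma pd_smooth {d : ℕ} (i : Fin d) (f : Pt d → ℝ) (hf : ContDiff ℝ (⊤ : ℕ∞) f) :
    ContDiff ℝ (⊤ : ℕ∞) fun x => pd i f x :=
  (hf.fderiv_right (by simp)).clm_apply contDiff_const

lemma pd_add {d : ℕ} (i : Fin d) {f h : Pt d → ℝ} {x : Pt d}
    (hf : DifferentiableAt ℝ f x) (hh : DifferentiableAt ℝ h x) :
    pd i (fun y => f y + h y) x = pd i f x + pd i h x := by
  unfold pd; rw [fderiv_fun_add hf hh]; rfl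

lemma pd_sub {d : ℕ} (i : Fin d) {f h : Pt d → ℝ} {x : Pt d}
    (hf : DifferentiableAt ℝ f x) (hh : DifferentiableAt ℝ h x) :
    pd i (fun y => f y - h y) x = pd i f x - pd i h x := by
  unfold pd; rw [fderiv_fun_sub hf hh]; rfl

lemma pd_mul {d : ℕ} (i : Fin d) {f h : Pt d → ℝ} {x : Pt d}
    (hf : DifferentiableAt ℝ f x) (hh : DifferentiableAt ℝ h x) :
    pd i (fun y => f y * h y) x = f x * pd i h x + h x * pd i f x := by
  unfold pd; rw [fderiv_fun_mul hf hh]; simp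

lemma pd_const_mul {d : ℕ} (i : Fin d) (c : ℝ) {f : Pt d → ℝ} {x : Pt d}
    (hf : DifferentiableAt ℝ f x) :
    pd i (fun y => c * f y) x = c * pd i f x := by
  unfold pd; rw [fderiv_const_mul hf]; rfl

lemma pd_sum {d : ℕ} (i : Fin d) {f : Fin 4 → Pt d → ℝ} {x : Pt d}
    (hf : ∀ j, DifferentiableAt ℝ (f j) x) :
    pd i (fun y => ∑ j, f j y) x = ∑ j, pd i (f j) x := by
  unfold pd; rw [fderiv_fun_sum fun j _ => hf j]; simp

lemma pd_comm {d : ℕ} (i j : Fin d) (f : Pt d → ℝ) (hf : ContDiff ℝ (⊤ : ℕ∞) f) (x : Pt d) :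
    pd i (fun y => pd j f y) x = pd j (fun y => pd i f y) x := by
  have hdiff : Differentiable ℝ f := hf.differentiable (by simp)
  have hf' : ContDiff ℝ (⊤ : ℕ∞) (fderiv ℝ f) := hf.fderiv_right (by simp)
  have hfd : DifferentiableAt ℝ (fderiv ℝ f) x := (hf'.differentiable (by simp)) x
  have hsym := second_derivative_symmetric (f' := fderiv ℝ f)
    (fun y => (hdiff y).hasFDerivAt) (hfd.hasFDerivAt) (Pi.single i 1) (Pi.single j 1)
  have key : ∀ u v : Fin d, pd u (fun y => pd v f y) x
      = fderiv ℝ (fderiv ℝ f) x (Pi.single u 1) (Pi.single v 1) := by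
    intro u v
    unfold pd
    rw [fderiv_clm_apply hfd (differentiableAt_const _)]
    simp
  rw [key i j, key j i, hsym]
end PD

/-- Christoffel symbol of the first kind -/
def G1 (g : Pt 4 → Fin 4 → Fin 4 → ℝ) (x : Pt 4) (l a b : Fin 4) : ℝ :=
  (1/2) * (pd a (fun y => g y l b) x + pd b (fun y => g y l a) x - pd l (fun y => g y a b) x)

section Geom
variable {g ginv : Pt 4 → Fin 4 → Fin 4 → ℝ}
variable (hg : ∀ α β, ContDiff ℝ (⊤ : ℕ∞) fun x => g x α β)
variable (hsymm : ∀ x α β, g x α β = g x β α)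
variable (hinv : ∀ x α β, ∑ μ, g x α μ * ginv x μ β = if α = β then (1:ℝ) else 0)
variable (hLor : ∀ x, IsLorentzian (g x))

include hsymm in
lemma gsym_fun (a b : Fin 4) : (fun y => g y a b) = fun y => g y b a :=
  funext fun y => hsymm y a b

include hg in
lemma G1_smooth (l a b : Fin 4) : ContDiff ℝ (⊤ : ℕ∞) fun x => G1 g x l a b := by
  unfold G1
  exact contDiff_const.mul (((pd_smooth a _ (hg l b)).add (pd_smooth b _ (hg l a))).sub
    (pd_smooth l _ (hg a b)))

lemma christoffel_eq (x : Pt 4) (m a b : Fin 4) :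
    christoffel g ginv x m a b = ∑ n, ginv x m n * G1 g x n a b := by
  unfold christoffel G1
  rw [Finset.mul_sum]
  exact Finset.sum_congr rfl fun n _ => by ring

include hg hinv hLor in
lemma christoffel_smooth (m a b : Fin 4) :
    ContDiff ℝ (⊤ : ℕ∞) fun x => christoffel g ginv x m a b := by
  have e : (fun x => christoffel g ginv x m a b)
      = fun x => ∑ n, ginv x m n * G1 g x n a b := funext fun x => christoffel_eq x m a b
  rw [e]
  exact ContDiff.sum fun n _ => (ginv_smooth hg hinv hLor m n).mul (G1_smooth hg n a b)

include hsymm in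
lemma G1_symm (x : Pt 4) (l a b : Fin 4) : G1 g x l a b = G1 g x l b a := by
  unfold G1
  rw [gsym_fun hsymm a b]
  ring

include hsymm in
lemma christoffel_symm (x : Pt 4) (m a b : Fin 4) :
    christoffel g ginv x m a b = christoffel g ginv x m b a := by
  rw [christoffel_eq, christoffel_eq]
  exact Finset.sum_congr rfl fun n _ => by rw [G1_symm hsymm x n a b]

include hsymm in
lemma csym_fun (m a b : Fin 4) : (fun y => christoffel g ginv y m a b)
    = fun y => christoffel g ginv y m b a :=
  funext fun y => christoffel_symm hsymm y m a b

include hinv in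
lemma lowerGamma (x : Pt 4) (l a b : Fin 4) :
    (∑ ρ, g x l ρ * christoffel g ginv x ρ a b) = G1 g x l a b := by
  have e : ∀ ρ, g x l ρ * christoffel g ginv x ρ a b
      = ∑ n, (g x l ρ * ginv x ρ n) * G1 g x n a b := by
    intro ρ
    rw [christoffel_eq, Finset.mul_sum]
    exact Finset.sum_congr rfl fun n _ => by ring
  calc (∑ ρ, g x l ρ * christoffel g ginv x ρ a b)
      = ∑ ρ, ∑ n, (g x l ρ * ginv x ρ n) * G1 g x n a b := Finset.sum_congr rfl fun ρ _ => e ρ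
    _ = ∑ n, (∑ ρ, g x l ρ * ginv x ρ n) * G1 g x n a b := by
        rw [s12]
        exact Finset.sum_congr rfl fun n _ => (Finset.sum_mul _ _ _).symm
    _ = G1 g x l a b := by
        simp only [hinv x l]
        simp [Finset.sum_ite_eq', Finset.mem_univ]

include hsymm in
lemma pdg_eq (x : Pt 4) (m l r : Fin 4) :
    pd m (fun y => g y l r) x = G1 g x l m r + G1 g x r m l := by
  unfold G1
  rw [gsym_fun hsymm r l, gsym_fun hsymm r m, gsym_fun hsymm m l]
  ring
end Geom

section Geom2
variable {g ginv : Pt 4 → Fin 4 → Fin 4 → ℝ}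
variable (hg : ∀ α β, ContDiff ℝ (⊤ : ℕ∞) fun x => g x α β)
variable (hsymm : ∀ x α β, g x α β = g x β α)
variable (hinv : ∀ x α β, ∑ μ, g x α μ * ginv x μ β = if α = β then (1:ℝ) else 0)
variable (hLor : ∀ x, IsLorentzian (g x))

include hg hinv hLor in
lemma gpdG (x : Pt 4) (l m n s : Fin 4) :
    (∑ ρ, g x l ρ * pd m (fun y => christoffel g ginv y ρ n s) x)
    = pd m (fun y => G1 g y l n s) x
      - ∑ ρ, pd m (fun y => g y l ρ) x * christoffel g ginv x ρ n s := by
  have hgd : ∀ a b, DifferentiableAt ℝ (fun y => g y a b) x :=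
    fun a b => ((hg a b).differentiable (by simp)) x
  have hcd : ∀ ρ a b, DifferentiableAt ℝ (fun y => christoffel g ginv y ρ a b) x :=
    fun ρ a b => (((christoffel_smooth hg hinv hLor ρ a b)).differentiable (by simp)) x
  have e1 : (fun y => G1 g y l n s)
      = fun y => ∑ ρ, g y l ρ * christoffel g ginv y ρ n s :=
    funext fun y => (lowerGamma hinv y l n s).symm
  have e2 : pd m (fun y => G1 g y l n s) x
      = ∑ ρ, (g x l ρ * pd m (fun y => christoffel g ginv y ρ n s) x
          + christoffel g ginv x ρ n s * pd m (fun y => g y l ρ) x) := by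
    rw [e1, pd_sum (f := fun ρ y => g y l ρ * christoffel g ginv y ρ n s) m (fun ρ => (hgd l ρ).mul (hcd ρ n s))]
    exact Finset.sum_congr rfl fun ρ _ => pd_mul m (hgd l ρ) (hcd ρ n s)
  rw [e2, Finset.sum_add_distrib]
  have e3 : (∑ ρ, christoffel g ginv x ρ n s * pd m (fun y => g y l ρ) x)
      = ∑ ρ, pd m (fun y => g y l ρ) x * christoffel g ginv x ρ n s :=
    Finset.sum_congr rfl fun ρ _ => by ring
  rw [e3]
  ring
end Geom2

section Geom3
variable {g ginv : Pt 4 → Fin 4 → Fin 4 → ℝ}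
variable (hg : ∀ α β, ContDiff ℝ (⊤ : ℕ∞) fun x => g x α β)
variable (hsymm : ∀ x α β, g x α β = g x β α)
variable (hinv : ∀ x α β, ∑ μ, g x α μ * ginv x μ β = if α = β then (1:ℝ) else 0)
variable (hLor : ∀ x, IsLorentzian (g x))

include hg hsymm hinv hLor in
lemma Rlow (x : Pt 4) (l s m n : Fin 4) :
    riemann g ginv x l s m n
    = pd m (fun y => G1 g y l n s) x - pd n (fun y => G1 g y l m s) x
      - (∑ ρ, G1 g x ρ m l * christoffel g ginv x ρ n s)
      + ∑ ρ, G1 g x ρ n l * christoffel g ginv x ρ m s := by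
  unfold riemann riemannUp
  have split : (∑ ρ, g x l ρ *
      (pd m (fun y => christoffel g ginv y ρ n s) x - pd n (fun y => christoffel g ginv y ρ m s) x
        + ∑ lam, (christoffel g ginv x ρ m lam * christoffel g ginv x lam n s
          - christoffel g ginv x ρ n lam * christoffel g ginv x lam m s)))
      = (∑ ρ, g x l ρ * pd m (fun y => christoffel g ginv y ρ n s) x)
        - (∑ ρ, g x l ρ * pd n (fun y => christoffel g ginv y ρ m s) x)
        + ∑ ρ, ∑ lam, g x l ρ * (christoffel g ginv x ρ m lam * christoffel g ginv x lam n s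
          - christoffel g ginv x ρ n lam * christoffel g ginv x lam m s) := by
    rw [← Finset.sum_sub_distrib, ← Finset.sum_add_distrib]
    refine Finset.sum_congr rfl fun ρ _ => ?_
    rw [mul_add, Finset.mul_sum]
    ring
  rw [split, gpdG hg hinv hLor x l m n s, gpdG hg hinv hLor x l n m s]
  have quad : (∑ ρ, ∑ lam, g x l ρ * (christoffel g ginv x ρ m lam * christoffel g ginv x lam n s
      - christoffel g ginv x ρ n lam * christoffel g ginv x lam m s))
      = (∑ lam, G1 g x l m lam * christoffel g ginv x lam n s)
        - ∑ lam, G1 g x l n lam * christoffel g ginv x lam m s := by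
    rw [s12, ← Finset.sum_sub_distrib]
    refine Finset.sum_congr rfl fun lam _ => ?_
    rw [← lowerGamma hinv x l m lam, ← lowerGamma hinv x l n lam,
      Finset.sum_mul, Finset.sum_mul, ← Finset.sum_sub_distrib]
    refine Finset.sum_congr rfl fun ρ _ => by ring
  rw [quad]
  have pg1 : (∑ ρ, pd m (fun y => g y l ρ) x * christoffel g ginv x ρ n s)
      = ∑ ρ, (G1 g x l m ρ + G1 g x ρ m l) * christoffel g ginv x ρ n s :=
    Finset.sum_congr rfl fun ρ _ => by rw [pdg_eq hsymm x m l ρ]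
  have pg2 : (∑ ρ, pd n (fun y => g y l ρ) x * christoffel g ginv x ρ m s)
      = ∑ ρ, (G1 g x l n ρ + G1 g x ρ n l) * christoffel g ginv x ρ m s :=
    Finset.sum_congr rfl fun ρ _ => by rw [pdg_eq hsymm x n l ρ]
  rw [pg1, pg2]
  simp only [add_mul, Finset.sum_add_distrib]
  ring
end Geom3

section Geom4
variable {g ginv : Pt 4 → Fin 4 → Fin 4 → ℝ}
variable (hg : ∀ α β, ContDiff ℝ (⊤ : ℕ∞) fun x => g x α β)
variable (hsymm : ∀ x α β, g x α β = g x β α)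
variable (hinv : ∀ x α β, ∑ μ, g x α μ * ginv x μ β = if α = β then (1:ℝ) else 0)
variable (hLor : ∀ x, IsLorentzian (g x))

include hsymm hinv in
lemma quadSym (x : Pt 4) (a b c d : Fin 4) :
    (∑ ρ, G1 g x ρ a b * christoffel g ginv x ρ c d)
    = ∑ ρ, G1 g x ρ c d * christoffel g ginv x ρ a b := by
  have e : ∀ u v w p q r : Fin 4, ∀ X Y : Fin 4 → ℝ,
      (∑ ρ, X ρ * christoffel g ginv x ρ c d) = ∑ ρ, ∑ t, X ρ * (ginv x ρ t * G1 g x t c d) := by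
    intro _ _ _ _ _ _ X _
    refine Finset.sum_congr rfl fun ρ _ => ?_
    rw [christoffel_eq, Finset.mul_sum]
  calc (∑ ρ, G1 g x ρ a b * christoffel g ginv x ρ c d)
      = ∑ ρ, ∑ t, G1 g x ρ a b * (ginv x ρ t * G1 g x t c d) := by
        refine Finset.sum_congr rfl fun ρ _ => ?_
        rw [christoffel_eq, Finset.mul_sum]
    _ = ∑ ρ, ∑ t, G1 g x ρ c d * (ginv x ρ t * G1 g x t a b) := by
        rw [s12]
        refine sum2_congr fun ρ t => ?_
        rw [ginv_symm hsymm hinv x t ρ]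
        ring
    _ = ∑ ρ, G1 g x ρ c d * christoffel g ginv x ρ a b := by
        refine Finset.sum_congr rfl fun ρ _ => ?_
        rw [christoffel_eq, Finset.mul_sum]

include hg hsymm hinv hLor in
lemma Riem_anti1 (x : Pt 4) (l s m n : Fin 4) :
    riemann g ginv x s l m n = - riemann g ginv x l s m n := by
  rw [Rlow hg hsymm hinv hLor x l s m n, Rlow hg hsymm hinv hLor x s l m n]
  have hG1d : ∀ u v w : Fin 4, DifferentiableAt ℝ (fun y => G1 g y u v w) x :=
    fun u v w => ((G1_smooth hg u v w).differentiable (by simp)) x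
  -- derivative terms
  have der : ∀ u v : Fin 4, pd u (fun y => G1 g y l v s) x + pd u (fun y => G1 g y s v l) x
      = pd u (fun y => pd v (fun z => g z l s) y) x := by
    intro u v
    rw [← pd_add u (hG1d l v s) (hG1d s v l)]
    congr 1
    funext y
    rw [pdg_eq hsymm y v l s]
  have comm := pd_comm m n (fun z => g z l s) (hg l s) x
  have q1 := quadSym hsymm hinv x m l n s
  have q2 := quadSym hsymm hinv x n l m s
  have d1 := der m n
  have d2 := der n m
  linarith [comm, q1, q2, d1, d2]

lemma RiemUp_anti2 (x : Pt 4) (r s m n : Fin 4) :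
    riemannUp g ginv x r s n m = - riemannUp g ginv x r s m n := by
  unfold riemannUp
  have e : (∑ lam, (christoffel g ginv x r n lam * christoffel g ginv x lam m s
      - christoffel g ginv x r m lam * christoffel g ginv x lam n s))
      = - ∑ lam, (christoffel g ginv x r m lam * christoffel g ginv x lam n s
      - christoffel g ginv x r n lam * christoffel g ginv x lam m s) := by
    rw [← Finset.sum_neg_distrib]
    exact Finset.sum_congr rfl fun lam _ => by ring
  rw [e]
  ring

lemma Riem_anti2 (x : Pt 4) (l s m n : Fin 4) :
    riemann g ginv x l s n m = - riemann g ginv x l s m n := by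
  unfold riemann
  rw [← Finset.sum_neg_distrib]
  refine Finset.sum_congr rfl fun ρ _ => ?_
  rw [RiemUp_anti2 x ρ s m n]
  ring

include hsymm in
lemma RiemUp_bianchi (x : Pt 4) (r s m n : Fin 4) :
    riemannUp g ginv x r s m n + riemannUp g ginv x r m n s + riemannUp g ginv x r n s m = 0 := by
  unfold riemannUp
  have q : (∑ lam, (christoffel g ginv x r m lam * christoffel g ginv x lam n s
        - christoffel g ginv x r n lam * christoffel g ginv x lam m s))
      + (∑ lam, (christoffel g ginv x r n lam * christoffel g ginv x lam s m
        - christoffel g ginv x r s lam * christoffel g ginv x lam n m))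
      + (∑ lam, (christoffel g ginv x r s lam * christoffel g ginv x lam m n
        - christoffel g ginv x r m lam * christoffel g ginv x lam s n)) = 0 := by
    rw [← Finset.sum_add_distrib, ← Finset.sum_add_distrib]
    refine Finset.sum_eq_zero fun lam _ => ?_
    rw [christoffel_symm hsymm x lam s m, christoffel_symm hsymm x lam n m,
      christoffel_symm hsymm x lam s n]
    ring
  rw [csym_fun hsymm r s m, csym_fun hsymm r s n, csym_fun hsymm r n m] at *
  linarith [q]
end Geom4

section Geom5
variable {g ginv : Pt 4 → Fin 4 → Fin 4 → ℝ}
variable (hg : ∀ α β, ContDiff ℝ (⊤ : ℕ∞) fun x => g x α β)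
variable (hsymm : ∀ x α β, g x α β = g x β α)
variable (hinv : ∀ x α β, ∑ μ, g x α μ * ginv x μ β = if α = β then (1:ℝ) else 0)
variable (hLor : ∀ x, IsLorentzian (g x))

include hsymm in
lemma Riem_bianchi (x : Pt 4) (l s m n : Fin 4) :
    riemann g ginv x l s m n + riemann g ginv x l m n s + riemann g ginv x l n s m = 0 := by
  unfold riemann
  rw [← Finset.sum_add_distrib, ← Finset.sum_add_distrib]
  refine Finset.sum_eq_zero fun ρ _ => ?_
  have h0 := RiemUp_bianchi hsymm (ginv := ginv) x ρ s m n
  linear_combination g x l ρ * h0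

include hg hsymm hinv hLor in
lemma Riem_pair (x : Pt 4) (a b c d : Fin 4) :
    riemann g ginv x a b c d = riemann g ginv x c d a b := by
  set R := riemann g ginv x with hR
  have A1 : ∀ p q r t : Fin 4, R q p r t = - R p q r t :=
    fun p q r t => Riem_anti1 hg hsymm hinv hLor x p q r t
  have A2 : ∀ p q r t : Fin 4, R p q t r = - R p q r t :=
    fun p q r t => Riem_anti2 (ginv := ginv) x p q r t
  have B : ∀ p q r t : Fin 4, R p q r t + R p r t q + R p t q r = 0 :=
    fun p q r t => Riem_bianchi hsymm x p q r t
  have B1 := B a b c d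
  have B2 := B b c d a
  have B3 := B c a b d
  have B4 := B d a b c
  have e1 : R b c d a = - R c b d a := A1 c b d a
  have e2 : R c b d a = - R c b a d := A2 c b a d
  have e3 : R b d a c = - R d b a c := A1 d b a c
  have e4 : R d b a c = - R d b c a := A2 d b c a
  have e5 : R b a c d = - R a b c d := A1 a b c d
  have e6 : R c a b d = - R a c b d := A1 a c b d
  have e7 : R a c b d = - R a c d b := A2 a c d b
  have e10 : R d a b c = - R a d b c := A1 a d b c
  have e11 : R d b c a = - R b d c a := A1 b d c a
  have e12 : R b d c a = - R b d a c := A2 b d a c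
  have e13 : R d c a b = - R c d a b := A1 c d a b
  linarith

include hg hsymm hinv hLor in
lemma Riem_trace (hRic : ∀ x σ ν, ricci g ginv x σ ν = 0) (x : Pt 4) (b d : Fin 4) :
    (∑ a, ∑ c, ginv x a c * riemann g ginv x a b c d) = 0 := by
  unfold riemann
  calc (∑ a, ∑ c, ginv x a c * ∑ ρ, g x a ρ * riemannUp g ginv x ρ b c d)
      = ∑ c, ∑ ρ, (∑ a, ginv x c a * g x a ρ) * riemannUp g ginv x ρ b c d := by
        rw [s12]
        refine Finset.sum_congr rfl fun c _ => ?_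
        calc (∑ a, ginv x a c * ∑ ρ, g x a ρ * riemannUp g ginv x ρ b c d)
            = ∑ a, ∑ ρ, ginv x c a * g x a ρ * riemannUp g ginv x ρ b c d := by
              refine Finset.sum_congr rfl fun a _ => ?_
              rw [Finset.mul_sum, ginv_symm hsymm hinv x a c]
              exact Finset.sum_congr rfl fun ρ _ => by ring
          _ = ∑ ρ, ∑ a, ginv x c a * g x a ρ * riemannUp g ginv x ρ b c d := by
              rw [s12]
          _ = ∑ ρ, (∑ a, ginv x c a * g x a ρ) * riemannUp g ginv x ρ b c d :=
              Finset.sum_congr rfl fun ρ _ => (Finset.sum_mul _ _ _).symm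
    _ = ∑ c, riemannUp g ginv x c b c d := by
        refine Finset.sum_congr rfl fun c _ => ?_
        simp only [hinv' hinv x c]
        simp [Finset.sum_ite_eq, Finset.mem_univ]
    _ = 0 := hRic x b d
end Geom5

open Finset in
lemma epsZ_sum : ∀ a b c d : Fin 4, (∑ σ : Equiv.Perm (Fin 4),
      if σ 0 = a ∧ σ 1 = b ∧ σ 2 = c ∧ σ 3 = d then ((Equiv.Perm.sign σ : ℤ)) else 0)
      = epsZ a b c d := by
  decide

lemma eps4_eq_ER (a b c d : Fin 4) : eps4 a b c d = ER a b c d := by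
  rw [ER, eps4, ← epsZ_sum a b c d]
  push_cast
  rfl

open Finset in
lemma pull4 (c : ℝ) (f : Fin 4 → Fin 4 → Fin 4 → Fin 4 → ℝ) :
    (∑ a, ∑ b, ∑ p, ∑ q, c * f a b p q) = c * ∑ a, ∑ b, ∑ p, ∑ q, f a b p q := by
  simp only [Finset.mul_sum]

/-- On a Ricci-flat 4-dimensional Lorentzian manifold the left and right
Hodge duals of the Riemann tensor coincide:
`(1/2) ∈_{αβ}{}^{μν} R_{μνγδ} = (1/2) R_{αβμν} ∈^{μν}{}_{γδ}`. -/
theorem left_dual_eq_right_dual_of_ricci_flat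
    (g ginv : Pt 4 → Fin 4 → Fin 4 → ℝ)
    (hg : ∀ α β, ContDiff ℝ (⊤ : ℕ∞) fun x => g x α β)
    (hsymm : ∀ x α β, g x α β = g x β α)
    (hinv : ∀ x α β, ∑ μ, g x α μ * ginv x μ β = if α = β then (1:ℝ) else 0)
    (hLor : ∀ x, IsLorentzian (g x))
    (hRic : ∀ x σ ν, ricci g ginv x σ ν = 0) :
    ∀ x α β γ δ,
      (1/2) * (∑ μ, ∑ ν, ∑ ρ, ∑ σ,
          vol4 g x α β ρ σ * ginv x ρ μ * ginv x σ ν * riemann g ginv x μ ν γ δ)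
        = (1/2) * (∑ μ, ∑ ν, ∑ ρ, ∑ σ,
          riemann g ginv x α β μ ν * ginv x μ ρ * ginv x ν σ * vol4 g x ρ σ γ δ) := by
  intro x α β γ δ
  have hH : ∀ a b, ginv x a b = ginv x b a := fun a b => ginv_symm hsymm hinv x a b
  have hA1 : ∀ a b c d, riemann g ginv x b a c d = - riemann g ginv x a b c d :=
    fun a b c d => Riem_anti1 hg hsymm hinv hLor x a b c d
  have hA2 : ∀ a b c d, riemann g ginv x a b d c = - riemann g ginv x a b c d :=
    fun a b c d => Riem_anti2 (g := g) (ginv := ginv) x a b c d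
  have hP : ∀ a b c d, riemann g ginv x a b c d = riemann g ginv x c d a b :=
    fun a b c d => Riem_pair hg hsymm hinv hLor x a b c d
  have hTr : ∀ b d, (∑ a, ∑ c, ginv x a c * riemann g ginv x a b c d) = 0 :=
    fun b d => Riem_trace hg hsymm hinv hLor hRic x b d
  have key := dualAlg hH hA1 hA2 hP hTr α β γ δ
  set cst := Real.sqrt |Matrix.det (Matrix.of (g x))| with hcst
  have L : (∑ μ, ∑ ν, ∑ ρ, ∑ σ,
        vol4 g x α β ρ σ * ginv x ρ μ * ginv x σ ν * riemann g ginv x μ ν γ δ)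
      = cst * ∑ μ, ∑ ν, ∑ ρ, ∑ σ,
        ER α β ρ σ * ginv x ρ μ * ginv x σ ν * riemann g ginv x μ ν γ δ := by
    rw [← pull4]
    refine sum4_congr fun μ ν ρ σ => ?_
    rw [vol4, eps4_eq_ER]
    ring
  have R : (∑ μ, ∑ ν, ∑ ρ, ∑ σ,
        riemann g ginv x α β μ ν * ginv x μ ρ * ginv x ν σ * vol4 g x ρ σ γ δ)
      = cst * ∑ μ, ∑ ν, ∑ ρ, ∑ σ,
        riemann g ginv x α β μ ν * ginv x μ ρ * ginv x ν σ * ER ρ σ γ δ := by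
    rw [← pull4]
    refine sum4_congr fun μ ν ρ σ => ?_
    rw [vol4, eps4_eq_ER]
    ring
  rw [L, R, key]
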